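/- Let 𝔑 ⊆ 𝔐₁(ℂ^ℕ), 𝔑̃ ⊆ 𝔐₁(ℂ^ℕ) be compact and V ⊆ ℂ^ℕ Borel with η(V)=1 for all η ∈ 𝔑. Let g⁽ⁿ⁾, g be Borel maps 𝔑 × V → ℂ^ℕ with induced pushforwards taking values in 𝔑̃, such that each induced map (g⁽ⁿ⁾)_* : 𝔑 → 𝔑̃ is continuous, and g⁽ⁿ⁾ → g in the topology of uniform-in-η convergence in probability. Then the induced map g_* : 𝔑 → 𝔑̃ is uniformly continuous. -/

import Mathlib

open MeasureTheory Topology Metric Filter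
open scoped NNReal
open scoped ENNReal

attribute [local instance] PiCountable.metricSpace

/- Borel structure on the space of probability measures (weak topology). -/
noncomputable local instance : MeasurableSpace (ProbabilityMeasure (ℕ → ℂ)) := borel _

/-- Coupling bound for the Lévy–Prokhorov distance: if two random variables agree within `δ`
outside a set of measure at most `δ`, their laws are within LP-distance `δ`. -/
lemma stmt12_coupling {Ω X : Type*} [MeasurableSpace Ω] [MeasurableSpace X] [PseudoMetricSpace X]
    [OpensMeasurableSpace X]
    (μ : Measure Ω) [IsProbabilityMeasure μ] {a b : Ω → X} (ha : Measurable a) (hb : Measurable b)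
    {V : Set Ω} (hV : MeasurableSet V) (hfull : μ V = 1) {δ : ℝ} (hδ : 0 < δ)
    (h : μ {t ∈ V | δ < dist (a t) (b t)} ≤ ENNReal.ofReal δ) :
    levyProkhorovDist (μ.map a) (μ.map b) ≤ δ := by
  haveI : IsProbabilityMeasure (μ.map a) := Measure.isProbabilityMeasure_map ha.aemeasurable
  haveI : IsProbabilityMeasure (μ.map b) := Measure.isProbabilityMeasure_map hb.aemeasurable
  apply levyProkhorovDist_le_of_forall_le _ _ hδ.le
  intro ε B hε hB
  rw [Measure.map_apply ha hB, Measure.map_apply hb isOpen_thickening.measurableSet]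
  have hVc : μ Vᶜ = 0 := by
    rw [measure_compl hV (measure_ne_top μ V), hfull, measure_univ, tsub_self]
  have h1 : μ (a ⁻¹' B) ≤ μ (a ⁻¹' B ∩ V) := by
    calc μ (a ⁻¹' B) ≤ μ ((a ⁻¹' B ∩ V) ∪ Vᶜ) := measure_mono (fun t ht => by
          by_cases htV : t ∈ V
          · exact Or.inl ⟨ht, htV⟩
          · exact Or.inr htV)
    _ ≤ μ (a ⁻¹' B ∩ V) + μ Vᶜ := measure_union_le _ _
    _ = μ (a ⁻¹' B ∩ V) := by rw [hVc, add_zero]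
  refine h1.trans ?_
  have hsub : a ⁻¹' B ∩ V ⊆ b ⁻¹' (thickening ε B) ∪ {t ∈ V | δ < dist (a t) (b t)} := by
    rintro t ⟨htB, htV⟩
    by_cases hd : δ < dist (a t) (b t)
    · exact Or.inr ⟨htV, hd⟩
    · left
      refine Metric.mem_thickening_iff.mpr ⟨a t, htB, ?_⟩
      rw [dist_comm]
      push_neg at hd
      linarith
  calc μ (a ⁻¹' B ∩ V) ≤ μ (b ⁻¹' (thickening ε B)) + μ {t ∈ V | δ < dist (a t) (b t)} :=
        (measure_mono hsub).trans (measure_union_le _ _)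
  _ ≤ μ (b ⁻¹' (thickening ε B)) + ENNReal.ofReal ε :=
        add_le_add_right (h.trans (ENNReal.ofReal_le_ofReal hε.le)) _

set_option maxHeartbeats 1000000 in
/-- If all coordinates up to `K` are within `c`, the `PiCountable` distance is at most
`(K+1) * c + (1/2)^K`. -/
lemma stmt12_dist_pi_le {x y : ℕ → ℂ} {K : ℕ} {c : ℝ}
    (h : ∀ k ≤ K, dist (x k) (y k) ≤ c) :
    dist x y ≤ (K + 1) * c + (1/2)^K := by
  have hsum : Summable fun i : ℕ => min ((1 / 2) ^ Encodable.encode i : ℝ) (dist (x i) (y i)) :=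
    by simpa only [one_div] using PiCountable.dist_summable x y
  rw [PiCountable.dist_eq_tsum]
  simp only [Encodable.encode_nat, ← one_div] at hsum ⊢
  rw [← Summable.sum_add_tsum_nat_add (K + 1) hsum]
  have h1 : ∑ i ∈ Finset.range (K + 1), min ((1/2)^i : ℝ) (dist (x i) (y i)) ≤ (K + 1) * c := by
    calc ∑ i ∈ Finset.range (K + 1), min ((1/2)^i : ℝ) (dist (x i) (y i))
        ≤ ∑ i ∈ Finset.range (K + 1), c := by
          refine Finset.sum_le_sum fun i hi => ?_
          exact (min_le_right _ _).trans (h i (Nat.lt_succ_iff.mp (Finset.mem_range.mp hi)))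
      _ = (K + 1) * c := by simp [mul_comm]
  have h2 : ∑' i : ℕ, min ((1/2)^(i + (K + 1)) : ℝ) (dist (x (i + (K + 1))) (y (i + (K + 1))))
      ≤ (1/2)^K := by
    have key : ∑' i : ℕ, ((1/2 : ℝ))^(i + (K + 1)) = (1/2)^K := by
      have hgeo := tsum_geometric_of_lt_one (r := (1/2 : ℝ)) (by norm_num) (by norm_num)
      calc ∑' i : ℕ, ((1/2 : ℝ))^(i + (K + 1))
          = ∑' i : ℕ, ((1/2 : ℝ))^i * (1/2)^(K+1) := by
            congr 1; ext i; rw [pow_add]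
        _ = (∑' i : ℕ, ((1/2 : ℝ))^i) * (1/2)^(K+1) := by rw [tsum_mul_right]
        _ = (1/2)^K := by rw [hgeo]; ring
    have hg : Summable fun i : ℕ => ((1/2:ℝ))^(i + (K+1)) := by
      simp_rw [pow_add]
      exact (summable_geometric_of_lt_one (by norm_num) (by norm_num)).mul_right _
    rw [← key]
    exact Summable.tsum_le_tsum (fun i => min_le_left _ _) ((summable_nat_add_iff (K+1)).mpr hsum) hg
  linarith

/-- Let `𝔑, 𝔑̃ ⊆ 𝔐₁(ℂ^ℕ)` be compact, `V` Borel of full `𝔑`-measure. If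
Borel maps `g⁽ⁿ⁾, g : 𝔑 × V → ℂ^ℕ` have induced pushforwards with values in `𝔑̃`, each
`(g⁽ⁿ⁾)_* : 𝔑 → 𝔑̃` is continuous, and `g⁽ⁿ⁾ → g` uniformly in probability (coordinatewise),
then `g_*` is uniformly continuous on `𝔑` (Lévy–Prokhorov metrics). -/
theorem stmt12 {𝔑 𝔑' : Set (ProbabilityMeasure (ℕ → ℂ))}
    (h𝔑 : IsCompact 𝔑) (h𝔑' : IsCompact 𝔑')
    {V : Set (ℕ → ℂ)} (hV : MeasurableSet V)
    (hfull : ∀ η ∈ 𝔑, (η : Measure (ℕ → ℂ)) V = 1)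
    (g : ℕ → ProbabilityMeasure (ℕ → ℂ) → (ℕ → ℂ) → (ℕ → ℂ))
    (g₀ : ProbabilityMeasure (ℕ → ℂ) → (ℕ → ℂ) → (ℕ → ℂ))
    (hg : ∀ n, Measurable (Function.uncurry (g n)))
    (hg₀ : Measurable (Function.uncurry g₀))
    (hmeas : ∀ n η, Measurable (g n η)) (hmeas₀ : ∀ η, Measurable (g₀ η))
    (hrange : ∀ n, ∀ η ∈ 𝔑, (η : ProbabilityMeasure (ℕ → ℂ)).map
      (hmeas n η).aemeasurable ∈ 𝔑')
    (hrange₀ : ∀ η ∈ 𝔑, (η : ProbabilityMeasure (ℕ → ℂ)).map (hmeas₀ η).aemeasurable ∈ 𝔑')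
    (hcont : ∀ n, Continuous fun η : ↥𝔑 =>
      (η : ProbabilityMeasure (ℕ → ℂ)).map (hmeas n η).aemeasurable)
    (hconv : ∀ k : ℕ, ∀ ε > (0 : ℝ),
      Tendsto (fun n => ⨆ η : ↥𝔑, (((η : ProbabilityMeasure (ℕ → ℂ))
          {t ∈ V | ε < ‖g n η t k - g₀ η t k‖} : ℝ≥0) : ℝ))
        atTop (𝓝 0)) :
    ∀ ε > (0 : ℝ), ∃ δ > (0 : ℝ), ∀ η ∈ 𝔑, ∀ η' ∈ 𝔑,
      levyProkhorovDist (η : Measure (ℕ → ℂ)) (η' : Measure (ℕ → ℂ)) < δ →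
      levyProkhorovDist
          ((η : Measure (ℕ → ℂ)).map (g₀ η)) ((η' : Measure (ℕ → ℂ)).map (g₀ η')) ≤ ε := by
  intro ε hε
  set δ₀ : ℝ := ε / 3 with hδ₀def
  have hδ₀ : 0 < δ₀ := by positivity
  -- Step 1: choose a coordinate cutoff K
  obtain ⟨K, hK⟩ : ∃ K : ℕ, ((1/2 : ℝ))^K < δ₀ / 2 :=
    exists_pow_lt_of_lt_one (by positivity) (by norm_num)
  set c : ℝ := δ₀ / (2 * (K + 1)) with hcdef
  have hc : 0 < c := by positivity
  set r : ℝ := δ₀ / (K + 1) with hrdef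
  have hr : 0 < r := by positivity
  -- Step 2: choose n such that g n is uniformly close to g₀ in probability
  have hev : ∀ᶠ n in atTop, ∀ k ∈ Finset.range (K + 1),
      (⨆ η : ↥𝔑, (((η : ProbabilityMeasure (ℕ → ℂ))
        {t ∈ V | c < ‖g n η t k - g₀ η t k‖} : ℝ≥0) : ℝ)) < r := by
    rw [Filter.eventually_all_finset]
    intro k _
    exact (hconv k c hc).eventually_lt_const hr
  obtain ⟨n, hn⟩ := hev.exists
  -- Step 3: uniform closeness of (g n)_* and (g₀)_* in LP distance
  have key1 : ∀ η ∈ 𝔑, levyProkhorovDist ((η : Measure (ℕ → ℂ)).map (g n η))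
      ((η : Measure (ℕ → ℂ)).map (g₀ η)) ≤ δ₀ := by
    intro η hη
    refine stmt12_coupling _ (hmeas n η) (hmeas₀ η) hV (hfull η hη) hδ₀ ?_
    have hsub : {t ∈ V | δ₀ < dist (g n η t) (g₀ η t)} ⊆
        ⋃ k ∈ Finset.range (K + 1), {t ∈ V | c < ‖g n η t k - g₀ η t k‖} := by
      rintro t ⟨htV, htd⟩
      by_contra hmem
      simp only [Set.mem_iUnion, Set.mem_setOf_eq, not_exists, not_and] at hmem
      have hco : ∀ k ≤ K, dist (g n η t k) (g₀ η t k) ≤ c := by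
        intro k hk
        have := hmem k (Finset.mem_range.mpr (Nat.lt_succ_of_le hk)) htV
        rw [Complex.dist_eq]
        linarith [not_lt.mp this]
      have := stmt12_dist_pi_le hco
      have hKc : (K + 1 : ℝ) * c = δ₀ / 2 := by
        rw [hcdef]
        field_simp
      rw [hKc] at this
      linarith
    refine (measure_mono hsub).trans ?_
    refine (measure_biUnion_finset_le _ _).trans ?_
    have hbound : ∀ k ∈ Finset.range (K + 1),
        (η : Measure (ℕ → ℂ)) {t ∈ V | c < ‖g n η t k - g₀ η t k‖} ≤
          ENNReal.ofReal r := by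
      intro k hk
      have hble : BddAbove (Set.range fun η : ↥𝔑 => (((η : ProbabilityMeasure (ℕ → ℂ))
          {t ∈ V | c < ‖g n η t k - g₀ η t k‖} : ℝ≥0) : ℝ)) := by
        refine ⟨1, ?_⟩
        rintro x ⟨η', rfl⟩
        exact_mod_cast (η' : ProbabilityMeasure (ℕ → ℂ)).apply_le_one _
      have hles : (((η : ProbabilityMeasure (ℕ → ℂ))
          {t ∈ V | c < ‖g n η t k - g₀ η t k‖} : ℝ≥0) : ℝ) ≤ _ :=
        le_ciSup hble (⟨η, hη⟩ : ↥𝔑)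
      have hlt := hles.trans_lt (hn k hk)
      rw [← ProbabilityMeasure.ennreal_coeFn_eq_coeFn_toMeasure]
      rw [← ENNReal.ofReal_coe_nnreal]
      exact ENNReal.ofReal_le_ofReal hlt.le
    calc ∑ k ∈ Finset.range (K + 1),
          (η : Measure (ℕ → ℂ)) {t ∈ V | c < ‖g n η t k - g₀ η t k‖}
        ≤ ∑ _k ∈ Finset.range (K + 1), ENNReal.ofReal r := Finset.sum_le_sum hbound
      _ = (K + 1) * ENNReal.ofReal r := by
          simp [Finset.sum_const, Finset.card_range, nsmul_eq_mul]
      _ = ENNReal.ofReal δ₀ := by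
          rw [show ((K : ℝ≥0∞) + 1) = ENNReal.ofReal ((K : ℝ) + 1) by
                rw [ENNReal.ofReal_add (by positivity) zero_le_one]
                simp [ENNReal.ofReal_natCast],
              ← ENNReal.ofReal_mul (by positivity)]
          congr 1
          rw [hrdef]
          field_simp
  -- Step 4: uniform continuity of (g n)_* from compactness
  set T := LevyProkhorov.probabilityMeasureHomeomorph (Ω := (ℕ → ℂ)) with hTdef
  set f' : ProbabilityMeasure (ℕ → ℂ) → ProbabilityMeasure (ℕ → ℂ) :=
    fun η => η.map (hmeas n η).aemeasurable with hf'def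
  have hf'cont : ContinuousOn f' 𝔑 := continuousOn_iff_continuous_restrict.mpr (hcont n)
  set Φ : LevyProkhorov (ProbabilityMeasure (ℕ → ℂ)) →
      LevyProkhorov (ProbabilityMeasure (ℕ → ℂ)) := fun μ => T (f' (T.symm μ)) with hΦdef
  set s : Set (LevyProkhorov (ProbabilityMeasure (ℕ → ℂ))) := T '' 𝔑 with hsdef
  have hscomp : IsCompact s := h𝔑.image T.continuous
  have hΦcont : ContinuousOn Φ s := by
    refine (T.continuous.comp_continuousOn hf'cont).comp T.symm.continuous.continuousOn ?_
    rintro x ⟨η, hη, rfl⟩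
    simpa using hη
  have huc := hscomp.uniformContinuousOn_of_continuous hΦcont
  rw [Metric.uniformContinuousOn_iff] at huc
  obtain ⟨δ, hδpos, hδ⟩ := huc δ₀ hδ₀
  refine ⟨δ, hδpos, ?_⟩
  intro η hη η' hη' hdist
  -- apply uniform continuity
  have hdist' : dist (T η) (T η') < δ := hdist
  have hΦd : dist (Φ (T η)) (Φ (T η')) < δ₀ :=
    hδ (T η) ⟨η, hη, rfl⟩ (T η') ⟨η', hη', rfl⟩ hdist'
  have hΦη : Φ (T η) = T (f' η) := by simp [hΦdef]
  have hΦη' : Φ (T η') = T (f' η') := by simp [hΦdef]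
  rw [hΦη, hΦη'] at hΦd
  have key2 : levyProkhorovDist ((η : Measure (ℕ → ℂ)).map (g n η))
      ((η' : Measure (ℕ → ℂ)).map (g n η')) < δ₀ := by
    have : dist (T (f' η)) (T (f' η')) =
        levyProkhorovDist ((f' η) : Measure (ℕ → ℂ)) ((f' η') : Measure (ℕ → ℂ)) := rfl
    rw [this] at hΦd
    simpa [hf'def, ProbabilityMeasure.toMeasure_map] using hΦd
  -- Step 5: triangle inequality
  haveI h1 : IsProbabilityMeasure ((η : Measure (ℕ → ℂ)).map (g₀ η)) :=
    Measure.isProbabilityMeasure_map (hmeas₀ η).aemeasurable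
  haveI h2 : IsProbabilityMeasure ((η : Measure (ℕ → ℂ)).map (g n η)) :=
    Measure.isProbabilityMeasure_map (hmeas n η).aemeasurable
  haveI h3 : IsProbabilityMeasure ((η' : Measure (ℕ → ℂ)).map (g n η')) :=
    Measure.isProbabilityMeasure_map (hmeas n η').aemeasurable
  haveI h4 : IsProbabilityMeasure ((η' : Measure (ℕ → ℂ)).map (g₀ η')) :=
    Measure.isProbabilityMeasure_map (hmeas₀ η').aemeasurable
  have t1 := levyProkhorovDist_triangle ((η : Measure (ℕ → ℂ)).map (g₀ η))
    ((η : Measure (ℕ → ℂ)).map (g n η)) ((η' : Measure (ℕ → ℂ)).map (g₀ η'))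
  have t2 := levyProkhorovDist_triangle ((η : Measure (ℕ → ℂ)).map (g n η))
    ((η' : Measure (ℕ → ℂ)).map (g n η')) ((η' : Measure (ℕ → ℂ)).map (g₀ η'))
  have e1 : levyProkhorovDist ((η : Measure (ℕ → ℂ)).map (g₀ η))
      ((η : Measure (ℕ → ℂ)).map (g n η)) ≤ δ₀ := by
    rw [levyProkhorovDist_comm]
    exact key1 η hη
  have e3 : levyProkhorovDist ((η' : Measure (ℕ → ℂ)).map (g n η'))
      ((η' : Measure (ℕ → ℂ)).map (g₀ η')) ≤ δ₀ := key1 η' hη'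
  have : levyProkhorovDist ((η : Measure (ℕ → ℂ)).map (g₀ η))
      ((η' : Measure (ℕ → ℂ)).map (g₀ η')) ≤ δ₀ + (δ₀ + δ₀) :=
    t1.trans (add_le_add e1 (t2.trans (add_le_add key2.le e3)))
  have hsum3 : δ₀ + (δ₀ + δ₀) = ε := by rw [hδ₀def]; ring
  linarith
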